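/- Let D be a finite directed acyclic graph with vertex set partitioned into sources S, internal vertices I, and sinks T. Let X be a subset of I, and let σ₁ and σ₂ be any two permutations (orderings) of X. Then eliminating the vertices of X in order σ₁ yields the same directed graph as eliminating them in order σ₂; that is, D_{σ₁} = D_{σ₂}. -/
import Mathlib


variable {V : Type*} [DecidableEq V] [Fintype V]

/-- In-neighborhood of `v` in the edge set `E`. -/
def inN (E : Finset (V × V)) (v : V) : Finset V :=
  (E.filter fun p => p.2 = v).image Prod.fst

/-- Out-neighborhood of `v` in the edge set `E`. -/
def outN (E : Finset (V × V)) (v : V) : Finset V :=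
  (E.filter fun p => p.1 = v).image Prod.snd

/-- Elimination of vertex `v`: delete `v` and add an edge from every in-neighbor
to every out-neighbor of `v` (if not already present). -/
def elimv (E : Finset (V × V)) (v : V) : Finset (V × V) :=
  (E ∪ (inN E v) ×ˢ (outN E v)).filter fun p => p.1 ≠ v ∧ p.2 ≠ v

/-- Eliminate a sequence of vertices, in order. -/
def elimSeq (E : Finset (V × V)) (σ : List V) : Finset (V × V) :=
  σ.foldl elimv E

/-- Markowitz degree of `v`: in-degree times out-degree. -/
def mark (E : Finset (V × V)) (v : V) : ℕ :=
  (inN E v).card * (outN E v).card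

/-- Cost of an elimination sequence: sum of the Markowitz degrees at the
time of each elimination. -/
def cost (E : Finset (V × V)) : List V → ℕ
  | [] => 0
  | v :: σ => mark E v + cost (elimv E v) σ

/-- The directed graph with edge set `E` is acyclic. -/
def Acyclic (E : Finset (V × V)) : Prop :=
  ∀ v : V, ¬ Relation.TransGen (fun a b => (a, b) ∈ E) v v

/-- `E` is an acyclic digraph whose vertices are partitioned into sources `S`
(no in-edges), internal vertices `I`, and sinks `T` (no out-edges). -/
def IsDAGPartition (E : Finset (V × V)) (S I T : Finset V) : Prop :=
  Acyclic E ∧ Disjoint S I ∧ Disjoint S T ∧ Disjoint I T ∧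
    S ∪ I ∪ T = Finset.univ ∧ (∀ s ∈ S, inN E s = ∅) ∧ (∀ t ∈ T, outN E t = ∅)

/-- There is a directed path from `i` to `j` all of whose internal vertices
lie in `X` (the single-edge path has no internal vertices). -/
def PathThrough (E : Finset (V × V)) (X : Finset V) (i j : V) : Prop :=
  ∃ l : List V, (∀ v ∈ l, v ∈ X) ∧ List.Chain' (fun a b => (a, b) ∈ E) (i :: (l ++ [j]))

lemma mem_inN {E : Finset (V × V)} {v a : V} : a ∈ inN E v ↔ (a, v) ∈ E := by
  simp only [inN, Finset.mem_image, Finset.mem_filter]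
  constructor
  · rintro ⟨⟨x, y⟩, ⟨hm, rfl⟩, rfl⟩; exact hm
  · intro h; exact ⟨(a, v), ⟨h, rfl⟩, rfl⟩

lemma mem_outN {E : Finset (V × V)} {v b : V} : b ∈ outN E v ↔ (v, b) ∈ E := by
  simp only [outN, Finset.mem_image, Finset.mem_filter]
  constructor
  · rintro ⟨⟨x, y⟩, ⟨hm, rfl⟩, rfl⟩; exact hm
  · intro h; exact ⟨(v, b), ⟨h, rfl⟩, rfl⟩

lemma mem_elimv {E : Finset (V × V)} {v a b : V} :
    (a, b) ∈ elimv E v ↔ a ≠ v ∧ b ≠ v ∧ ((a, b) ∈ E ∨ ((a, v) ∈ E ∧ (v, b) ∈ E)) := by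
  simp only [elimv, Finset.mem_filter, Finset.mem_union, Finset.mem_product, mem_inN, mem_outN]
  tauto

lemma elimv_comm {E : Finset (V × V)} {u v : V}
    (h : ¬((u, v) ∈ E ∧ (v, u) ∈ E)) :
    elimv (elimv E u) v = elimv (elimv E v) u := by
  by_cases huv : u = v
  · subst huv; rfl
  ext ⟨a, b⟩
  simp only [mem_elimv]
  constructor
  · rintro ⟨hbv, hbb, (⟨hau, hbu, hab⟩ | ⟨⟨hau, hvu, hav⟩, ⟨hvu', hbu, hvb⟩⟩)⟩ <;> tauto
  · rintro ⟨hbv, hbb, (⟨hau, hbu, hab⟩ | ⟨⟨hau, hvu, hav⟩, ⟨hvu', hbu, hvb⟩⟩)⟩ <;> tauto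

lemma acyclic_elimv {E : Finset (V × V)} (hE : Acyclic E) (v : V) : Acyclic (elimv E v) := by
  have step : ∀ a b : V, (a, b) ∈ elimv E v →
      Relation.TransGen (fun a b => (a, b) ∈ E) a b := by
    intro a b h
    rw [mem_elimv] at h
    rcases h.2.2 with h' | ⟨h1, h2⟩
    · exact Relation.TransGen.single h'
    · exact (Relation.TransGen.single h1).trans (Relation.TransGen.single h2)
  have lift : ∀ a b : V, Relation.TransGen (fun a b => (a, b) ∈ elimv E v) a b →
      Relation.TransGen (fun a b => (a, b) ∈ E) a b := by
    intro a b h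
    induction h with
    | single h => exact step _ _ h
    | tail _ h ih => exact ih.trans (step _ _ h)
  exact fun w hw => hE w (lift w w hw)

lemma elimSeq_perm {σ₁ σ₂ : List V} (p : σ₁.Perm σ₂) :
    ∀ E : Finset (V × V), Acyclic E → elimSeq E σ₁ = elimSeq E σ₂ := by
  induction p with
  | nil => intro E _; rfl
  | cons x p ih =>
      intro E hE
      simpa [elimSeq] using ih (elimv E x) (acyclic_elimv hE x)
  | swap x y l =>
      intro E hE
      have h : ¬((y, x) ∈ E ∧ (x, y) ∈ E) := by
        rintro ⟨h1, h2⟩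
        exact hE x ((Relation.TransGen.single h2).trans (Relation.TransGen.single h1))
      simp only [elimSeq, List.foldl_cons]
      rw [elimv_comm h]
  | trans p₁ p₂ ih₁ ih₂ =>
      intro E hE
      exact (ih₁ E hE).trans (ih₂ E hE)

/-- the result of eliminating a set of internal vertices does not
depend on the order of elimination. -/
theorem elimSeq_order_irrelevant (E : Finset (V × V)) (S I T : Finset V)
    (hD : IsDAGPartition E S I T) (X : Finset V) (hX : X ⊆ I)
    (σ₁ σ₂ : List V) (h₁ : σ₁.Nodup) (h₂ : σ₂.Nodup)
    (hσ₁ : σ₁.toFinset = X) (hσ₂ : σ₂.toFinset = X) :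
    elimSeq E σ₁ = elimSeq E σ₂ :=
  elimSeq_perm (List.perm_of_nodup_nodup_toFinset_eq h₁ h₂ (hσ₁.trans hσ₂.symm)) E hD.1
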